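/- Let K be a smooth solution of the oriented associativity equations (AE) on ℝⁿ, let k ≥ 0, and let w_0, …, w_k be smooth matrix-valued functions on ℝⁿ with (w_0)^α_β = δ^α_β (Kronecker delta), (w_1)^α_β = ∂_β K^α (if k ≥ 1), and satisfying the recursion ∂_α (w_j)^β_γ = ∂_α∂_ρ K^β (w_{j−1})^ρ_γ for all α,β,γ and all j = 1,…,k. Then for each fixed β, the tuple G^α = (w_k)^α_β is a symmetry characteristic of (AE) at K, i.e. it satisfies the linearized oriented associativity equations (LAE). -/

import Mathlib

/-- Partial derivative of `f` in the `i`-th coordinate direction on `ℝⁿ`. -/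
noncomputable def pd {n : ℕ} (i : Fin n) (f : (Fin n → ℝ) → ℝ) : (Fin n → ℝ) → ℝ :=
  fun x => fderiv ℝ f x (Pi.single i 1)

lemma pd_contDiff {n : ℕ} {f : (Fin n → ℝ) → ℝ} (hf : ContDiff ℝ (⊤ : ℕ∞) f) (i : Fin n) :
    ContDiff ℝ (⊤ : ℕ∞) (pd i f) := by
  have h1 : ContDiff ℝ (⊤ : ℕ∞) (fderiv ℝ f) := hf.fderiv_right (by simp)
  exact h1.clm_apply contDiff_const

lemma pd_of_eq {n : ℕ} {f g : (Fin n → ℝ) → ℝ} (h : ∀ x, f x = g x) (i : Fin n) (x : Fin n → ℝ) :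
    pd i f x = pd i g x := by
  have : f = g := funext h
  rw [this]

lemma pd_const {n : ℕ} (c : ℝ) (i : Fin n) (x : Fin n → ℝ) :
    pd i (fun _ => c) x = 0 := by
  simp [pd]

lemma pd_comm {n : ℕ} {f : (Fin n → ℝ) → ℝ} (hf : ContDiff ℝ (⊤ : ℕ∞) f) (i j : Fin n)
    (x : Fin n → ℝ) : pd i (pd j f) x = pd j (pd i f) x := by
  have hd : DifferentiableAt ℝ (fderiv ℝ f) x :=
    ((hf.fderiv_right (m := 1) (WithTop.coe_le_coe.mpr le_top)).differentiable one_ne_zero) x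
  have h1 : ∀ a b : Fin n, pd a (pd b f) x
      = fderiv ℝ (fderiv ℝ f) x (Pi.single a 1) (Pi.single b 1) := by
    intro a b
    show fderiv ℝ (fun y => fderiv ℝ f y (Pi.single b 1)) x (Pi.single a 1) = _
    rw [fderiv_clm_apply hd (differentiableAt_const _)]
    simp
  rw [h1, h1]
  exact (hf.contDiffAt.isSymmSndFDerivAt (by rw [minSmoothness_of_isRCLikeNormedField]; exact WithTop.coe_le_coe.mpr (le_top : (2:ℕ∞) ≤ ⊤))) _ _

lemma pd_sum_mul {n : ℕ} {f g : Fin n → (Fin n → ℝ) → ℝ}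
    (i : Fin n) (x : Fin n → ℝ)
    (hf : ∀ ρ, DifferentiableAt ℝ (f ρ) x) (hg : ∀ ρ, DifferentiableAt ℝ (g ρ) x) :
    pd i (fun y => ∑ ρ, f ρ y * g ρ y) x
      = ∑ ρ, (pd i (f ρ) x * g ρ x + f ρ x * pd i (g ρ) x) := by
  have h : fderiv ℝ (fun y => ∑ ρ, f ρ y * g ρ y) x = ∑ ρ, fderiv ℝ (fun y => f ρ y * g ρ y) x :=
    fderiv_fun_sum (fun ρ _ => (hf ρ).mul (hg ρ))
  show fderiv ℝ (fun y => ∑ ρ, f ρ y * g ρ y) x (Pi.single i 1) = _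
  rw [h, ContinuousLinearMap.sum_apply]
  refine Finset.sum_congr rfl (fun ρ _ => ?_)
  rw [fderiv_fun_mul (hf ρ) (hg ρ)]
  simp only [pd, ContinuousLinearMap.add_apply, ContinuousLinearMap.smul_apply, smul_eq_mul]
  ring

section algebra
variable {n : ℕ}

noncomputable def Sq (T : Fin n → Fin n → Fin n → ℝ) (a b c ν : Fin n) : ℝ :=
  ∑ ρ, T a ρ ν * T b c ρ

noncomputable def Uq (T : Fin n → Fin n → Fin n → ℝ) (a b c e ν : Fin n) : ℝ :=
  ∑ σ, Sq T a b σ ν * T c e σ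

variable {T : Fin n → Fin n → Fin n → ℝ}
  (hTs : ∀ a b ν, T a b ν = T b a ν)
  (hT : ∀ a b g ν, (∑ ρ, T a ρ ν * T b g ρ) = ∑ ρ, T a b ρ * T ρ g ν)

include hTs in
lemma Sq_swap23 (a b c ν : Fin n) : Sq T a b c ν = Sq T a c b ν := by
  unfold Sq
  exact Finset.sum_congr rfl fun ρ _ => by rw [hTs b c]

include hTs hT in
lemma Sq_swap13 (a b c ν : Fin n) : Sq T a b c ν = Sq T c b a ν := by
  unfold Sq
  rw [hT]
  exact Finset.sum_congr rfl fun ρ _ => by rw [hTs ρ c, hTs a b]; ring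

include hTs hT in
lemma Sq_swap12 (a b c ν : Fin n) : Sq T a b c ν = Sq T b a c ν := by
  rw [Sq_swap13 hTs hT, Sq_swap23 hTs, Sq_swap13 hTs hT]

lemma Uq_alt (a b c e ν : Fin n) : Uq T a b c e ν = ∑ ρ, T a ρ ν * Sq T b c e ρ := by
  unfold Uq Sq
  simp only [Finset.sum_mul, Finset.mul_sum, mul_assoc]
  rw [Finset.sum_comm]

include hTs hT in
lemma Uq_swap12 (a b c e ν : Fin n) : Uq T a b c e ν = Uq T b a c e ν := by
  unfold Uq
  exact Finset.sum_congr rfl fun σ _ => by rw [Sq_swap12 hTs hT]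

include hTs in
lemma Uq_swap34 (a b c e ν : Fin n) : Uq T a b c e ν = Uq T a b e c ν := by
  unfold Uq
  exact Finset.sum_congr rfl fun σ _ => by rw [hTs c e]

include hTs hT in
lemma Uq_swap23 (a b c e ν : Fin n) : Uq T a b c e ν = Uq T a c b e ν := by
  rw [Uq_alt, Uq_alt]
  exact Finset.sum_congr rfl fun ρ _ => by rw [Sq_swap12 hTs hT]

end algebra

lemma reorg1 {n : ℕ} (P Sm : Fin n → Fin n → ℝ) (Q : Fin n → Fin n → Fin n → ℝ) (R c d : Fin n → ℝ) :
    ∑ ρ, (∑ σ, (P ρ σ * c σ + Sm ρ σ * (∑ τ, Q ρ σ τ * d τ))) * R ρ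
      = (∑ σ, c σ * (∑ ρ, P ρ σ * R ρ))
        + ∑ τ, d τ * (∑ ρ, (∑ σ, Sm ρ σ * Q ρ σ τ) * R ρ) := by
  simp only [Finset.sum_mul, Finset.mul_sum, add_mul, Finset.sum_add_distrib]
  congr 1
  · rw [Finset.sum_comm]
    exact Finset.sum_congr rfl fun σ _ => Finset.sum_congr rfl fun ρ _ => by ring
  · rw [show (∑ x : Fin n, ∑ y : Fin n, ∑ i : Fin n, Sm x y * (Q x y i * d i) * R x)
        = ∑ x : Fin n, ∑ i : Fin n, ∑ y : Fin n, Sm x y * (Q x y i * d i) * R x from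
        Finset.sum_congr rfl fun x _ => by rw [Finset.sum_comm], Finset.sum_comm]
    exact Finset.sum_congr rfl fun τ _ => Finset.sum_congr rfl fun ρ _ =>
      Finset.sum_congr rfl fun σ _ => by ring

lemma reorg2 {n : ℕ} (P Sm : Fin n → Fin n → ℝ) (Q : Fin n → Fin n → Fin n → ℝ) (R c d : Fin n → ℝ) :
    ∑ ρ, R ρ * (∑ σ, (P ρ σ * c σ + Sm ρ σ * (∑ τ, Q ρ σ τ * d τ)))
      = (∑ σ, c σ * (∑ ρ, R ρ * P ρ σ))
        + ∑ τ, d τ * (∑ ρ, R ρ * (∑ σ, Sm ρ σ * Q ρ σ τ)) := by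
  have h : ∀ ρ, R ρ * (∑ σ, (P ρ σ * c σ + Sm ρ σ * (∑ τ, Q ρ σ τ * d τ)))
      = (∑ σ, (P ρ σ * c σ + Sm ρ σ * (∑ τ, Q ρ σ τ * d τ))) * R ρ := fun ρ => mul_comm _ _
  simp only [h]
  rw [reorg1]
  congr 1
  · exact Finset.sum_congr rfl fun σ _ => by
      rw [Finset.sum_congr rfl fun ρ _ => mul_comm (P ρ σ) (R ρ)]
  · exact Finset.sum_congr rfl fun τ _ => by
      rw [Finset.sum_congr rfl fun ρ _ => mul_comm (∑ σ, Sm ρ σ * Q ρ σ τ) (R ρ)]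

lemma algebra_key {n : ℕ} (T : Fin n → Fin n → Fin n → ℝ)
    (D : Fin n → Fin n → Fin n → Fin n → ℝ) (c d : Fin n → ℝ)
    (hTs : ∀ a b ν, T a b ν = T b a ν)
    (hT : ∀ a b g ν, (∑ ρ, T a ρ ν * T b g ρ) = ∑ ρ, T a b ρ * T ρ g ν)
    (hD12 : ∀ s a b ν, D s a b ν = D a s b ν)
    (hD23 : ∀ s a b ν, D s a b ν = D s b a ν)
    (hD : ∀ s a b g ν, (∑ ρ, (D s a ρ ν * T b g ρ + T a ρ ν * D s b g ρ))
        = ∑ ρ, (D s a b ρ * T ρ g ν + T a b ρ * D s ρ g ν))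
    (α β γ ν : Fin n) :
    (∑ ρ, (∑ σ, (D α ρ σ ν * c σ + T ρ σ ν * (∑ τ, T α τ σ * d τ))) * T β γ ρ)
      + (∑ ρ, T α ρ ν * (∑ σ, (D β γ σ ρ * c σ + T γ σ ρ * (∑ τ, T β τ σ * d τ))))
    = (∑ ρ, (∑ σ, (D α β σ ρ * c σ + T β σ ρ * (∑ τ, T α τ σ * d τ))) * T ρ γ ν)
      + (∑ ρ, T α β ρ * (∑ σ, (D ρ γ σ ν * c σ + T γ σ ν * (∑ τ, T ρ τ σ * d τ)))) := by
  have r1 := reorg1 (fun ρ σ => D α ρ σ ν) (fun ρ σ => T ρ σ ν) (fun ρ σ τ => T α τ σ)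
    (fun ρ => T β γ ρ) c d
  have r2 := reorg2 (fun ρ σ => D β γ σ ρ) (fun ρ σ => T γ σ ρ) (fun ρ σ τ => T β τ σ)
    (fun ρ => T α ρ ν) c d
  have r3 := reorg1 (fun ρ σ => D α β σ ρ) (fun ρ σ => T β σ ρ) (fun ρ σ τ => T α τ σ)
    (fun ρ => T ρ γ ν) c d
  have r4 := reorg2 (fun ρ σ => D ρ γ σ ν) (fun ρ σ => T γ σ ν) (fun ρ σ τ => T ρ τ σ)
    (fun ρ => T α β ρ) c d
  rw [r1, r2, r3, r4]
  have hA : ∀ σ, ((∑ ρ, D α ρ σ ν * T β γ ρ) + (∑ ρ, T α ρ ν * D β γ σ ρ))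
      = ((∑ ρ, D α β σ ρ * T ρ γ ν) + (∑ ρ, T α β ρ * D ρ γ σ ν)) := by
    intro σ
    have h := hD σ α β γ ν
    rw [Finset.sum_add_distrib, Finset.sum_add_distrib] at h
    calc (∑ ρ, D α ρ σ ν * T β γ ρ) + (∑ ρ, T α ρ ν * D β γ σ ρ)
        = (∑ ρ, D σ α ρ ν * T β γ ρ) + (∑ ρ, T α ρ ν * D σ β γ ρ) := by
          congr 1
          · exact Finset.sum_congr rfl fun ρ _ => by rw [hD23 α ρ σ ν, hD12 α σ ρ ν]
          · exact Finset.sum_congr rfl fun ρ _ => by rw [hD23 β γ σ ρ, hD12 β σ γ ρ]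
      _ = (∑ ρ, D σ α β ρ * T ρ γ ν) + (∑ ρ, T α β ρ * D σ ρ γ ν) := h
      _ = (∑ ρ, D α β σ ρ * T ρ γ ν) + (∑ ρ, T α β ρ * D ρ γ σ ν) := by
          congr 1
          · exact Finset.sum_congr rfl fun ρ _ => by rw [hD23 α β σ ρ, hD12 α σ β ρ]
          · exact Finset.sum_congr rfl fun ρ _ => by rw [hD23 ρ γ σ ν, hD12 ρ σ γ ν]
  have e1 : ∀ τ, (∑ ρ, (∑ σ, T ρ σ ν * T α τ σ) * T β γ ρ) = Uq T α τ β γ ν := by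
    intro τ
    exact Finset.sum_congr rfl fun ρ _ => by
      rw [show (∑ σ, T ρ σ ν * T α τ σ) = Sq T ρ α τ ν from rfl,
        Sq_swap12 hTs hT, Sq_swap23 hTs]
  have e2 : ∀ τ, (∑ ρ, T α ρ ν * (∑ σ, T γ σ ρ * T β τ σ)) = Uq T α γ β τ ν := by
    intro τ
    rw [Uq_alt]
    exact Finset.sum_congr rfl fun ρ _ => by
      rw [show (∑ σ, T γ σ ρ * T β τ σ) = Sq T γ β τ ρ from rfl]
  have e3 : ∀ τ, (∑ ρ, (∑ σ, T β σ ρ * T α τ σ) * T ρ γ ν) = Uq T γ β α τ ν := by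
    intro τ
    rw [Uq_alt]
    refine Finset.sum_congr rfl fun ρ _ => ?_
    rw [show (∑ σ, T β σ ρ * T α τ σ) = Sq T β α τ ρ from rfl, hTs γ ρ ν]
    ring
  have e4 : ∀ τ, (∑ ρ, T α β ρ * (∑ σ, T γ σ ν * T ρ τ σ)) = Uq T γ τ α β ν := by
    intro τ
    rw [Uq_alt]
    simp only [Finset.mul_sum]
    rw [Finset.sum_comm]
    refine Finset.sum_congr rfl fun σ _ => ?_
    rw [show Sq T τ α β σ = ∑ ρ, T τ ρ σ * T α β ρ from rfl, Finset.mul_sum]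
    refine Finset.sum_congr rfl fun ρ _ => ?_
    rw [hTs ρ τ σ]
    ring
  have p1 : ∀ τ, Uq T α τ β γ ν = Uq T γ β α τ ν := by
    intro τ
    rw [Uq_swap12 hTs hT α τ β γ ν, Uq_swap23 hTs hT τ α β γ ν,
      Uq_swap34 hTs τ β α γ ν, Uq_swap12 hTs hT τ β γ α ν,
      Uq_swap23 hTs hT β τ γ α ν, Uq_swap34 hTs β γ τ α ν,
      Uq_swap12 hTs hT β γ α τ ν]
  have p2 : ∀ τ, Uq T α γ β τ ν = Uq T γ τ α β ν := by
    intro τ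
    rw [Uq_swap34 hTs α γ β τ ν, Uq_swap23 hTs hT α γ τ β ν,
      Uq_swap12 hTs hT α τ γ β ν, Uq_swap23 hTs hT τ α γ β ν,
      Uq_swap12 hTs hT τ γ α β ν]
  have hB : ∀ τ, (∑ ρ, (∑ σ, T ρ σ ν * T α τ σ) * T β γ ρ)
        + (∑ ρ, T α ρ ν * (∑ σ, T γ σ ρ * T β τ σ))
      = (∑ ρ, (∑ σ, T β σ ρ * T α τ σ) * T ρ γ ν)
        + (∑ ρ, T α β ρ * (∑ σ, T γ σ ν * T ρ τ σ)) := by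
    intro τ
    rw [e1 τ, e2 τ, e3 τ, e4 τ, p1 τ, p2 τ]
  have HA : (∑ σ, c σ * (∑ ρ, D α ρ σ ν * T β γ ρ)) + (∑ σ, c σ * (∑ ρ, T α ρ ν * D β γ σ ρ))
      = (∑ σ, c σ * (∑ ρ, D α β σ ρ * T ρ γ ν)) + (∑ σ, c σ * (∑ ρ, T α β ρ * D ρ γ σ ν)) := by
    rw [← Finset.sum_add_distrib, ← Finset.sum_add_distrib]
    exact Finset.sum_congr rfl fun σ _ => by rw [← mul_add, ← mul_add, hA σ]
  have HB : (∑ τ, d τ * (∑ ρ, (∑ σ, T ρ σ ν * T α τ σ) * T β γ ρ))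
        + (∑ τ, d τ * (∑ ρ, T α ρ ν * (∑ σ, T γ σ ρ * T β τ σ)))
      = (∑ τ, d τ * (∑ ρ, (∑ σ, T β σ ρ * T α τ σ) * T ρ γ ν))
        + (∑ τ, d τ * (∑ ρ, T α β ρ * (∑ σ, T γ σ ν * T ρ τ σ))) := by
    rw [← Finset.sum_add_distrib, ← Finset.sum_add_distrib]
    exact Finset.sum_congr rfl fun τ _ => by rw [← mul_add, ← mul_add, hB τ]
  linarith [HA, HB]

/-- the nonlocal potentials `(w_k)^α_β` obtained from the recursion
`∂_α (w_j)^β_γ = ∂_α∂_ρ K^β (w_{j−1})^ρ_γ`, with `w_0 = δ` and `w_1 = ∂K`, are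
symmetry characteristics of the oriented associativity equations. -/
theorem w_hierarchy_is_symmetry
    {n : ℕ} (hn : 1 ≤ n) (k : ℕ)
    (K : Fin n → (Fin n → ℝ) → ℝ)
    (w : ℕ → Fin n → Fin n → (Fin n → ℝ) → ℝ)
    (hK : ∀ α, ContDiff ℝ (⊤ : ℕ∞) (K α))
    (hw : ∀ j ≤ k, ∀ α β, ContDiff ℝ (⊤ : ℕ∞) (w j α β))
    (hAE : ∀ α β γ ν, ∀ x : Fin n → ℝ,
      ∑ ρ, pd α (pd ρ (K ν)) x * pd β (pd γ (K ρ)) x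
        = ∑ ρ, pd α (pd β (K ρ)) x * pd ρ (pd γ (K ν)) x)
    (hw0 : ∀ α β, ∀ x : Fin n → ℝ, w 0 α β x = if α = β then (1 : ℝ) else 0)
    (hw1 : 1 ≤ k → ∀ α β, ∀ x : Fin n → ℝ, w 1 α β x = pd β (K α) x)
    (hwrec : ∀ j, 1 ≤ j → j ≤ k → ∀ α β γ, ∀ x : Fin n → ℝ,
      pd α (w j β γ) x = ∑ ρ, pd α (pd ρ (K β)) x * w (j - 1) ρ γ x) :
    ∀ β, ∀ α' β' γ' ν', ∀ x : Fin n → ℝ,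
      (∑ ρ, pd α' (pd ρ (w k ν' β)) x * pd β' (pd γ' (K ρ)) x)
        + (∑ ρ, pd α' (pd ρ (K ν')) x * pd β' (pd γ' (w k ρ β)) x)
      = (∑ ρ, pd α' (pd β' (w k ρ β)) x * pd ρ (pd γ' (K ν')) x)
        + (∑ ρ, pd α' (pd β' (K ρ)) x * pd ρ (pd γ' (w k ν' β)) x) := by
  intro β α' β' γ' ν' x
  rcases Nat.eq_zero_or_pos k with hk0 | hk1
  · -- k = 0 : w 0 is constant, everything vanishes
    subst hk0
    have hz : ∀ (a b i j : Fin n) (y : Fin n → ℝ), pd i (pd j (w 0 a b)) y = 0 := by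
      intro a b i j y
      have h1 : ∀ z : Fin n → ℝ, pd j (w 0 a b) z = 0 := by
        intro z
        rw [pd_of_eq (hw0 a b) j z, pd_const]
      rw [pd_of_eq h1 i y, pd_const]
    simp [hz]
  · -- k ≥ 1
    obtain ⟨d, hd⟩ : ∃ d : Fin n → ℝ, ∀ (i σ : Fin n),
        pd i (w (k - 1) σ β) x = ∑ τ, pd i (pd τ (K σ)) x * d τ := by
      rcases eq_or_lt_of_le (show 1 ≤ k from hk1) with h1 | h2
      · refine ⟨fun _ => 0, fun i σ => ?_⟩
        have h0 : ∀ y : Fin n → ℝ, w (k - 1) σ β y = if σ = β then (1 : ℝ) else 0 := by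
          rw [← h1]
          exact fun y => hw0 σ β y
        rw [pd_of_eq h0 i x, pd_const]
        simp
      · exact ⟨fun τ => w (k - 1 - 1) τ β x, fun i σ => hwrec (k - 1) (by omega) (by omega) i σ β x⟩
    -- expansion of second derivatives of w k
    have expand : ∀ i μ j : Fin n,
        pd i (pd j (w k μ β)) x
          = ∑ σ, (pd i (pd j (pd σ (K μ))) x * w (k - 1) σ β x
              + pd j (pd σ (K μ)) x * (∑ τ, pd i (pd τ (K σ)) x * d τ)) := by
      intro i μ j
      have h1 : ∀ y : Fin n → ℝ, pd j (w k μ β) y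
          = ∑ σ, pd j (pd σ (K μ)) y * w (k - 1) σ β y :=
        fun y => hwrec k hk1 le_rfl j μ β y
      have s1 : pd i (pd j (w k μ β)) x
          = pd i (fun y => ∑ σ, pd j (pd σ (K μ)) y * w (k - 1) σ β y) x := pd_of_eq h1 i x
      have s2 : pd i (fun y => ∑ σ, pd j (pd σ (K μ)) y * w (k - 1) σ β y) x
          = ∑ σ, (pd i (pd j (pd σ (K μ))) x * w (k - 1) σ β x
              + pd j (pd σ (K μ)) x * pd i (w (k - 1) σ β) x) :=
        pd_sum_mul i x
          (fun σ => ((pd_contDiff (pd_contDiff (hK μ) σ) j).differentiable (by simp)) x)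
          (fun σ => ((hw (k - 1) (Nat.sub_le k 1) σ β).differentiable (by simp)) x)
      rw [s1, s2]
      exact Finset.sum_congr rfl fun σ _ => by rw [hd i σ]
    -- pointwise data for the algebraic lemma
    have hTs' : ∀ a b ν : Fin n, pd a (pd b (K ν)) x = pd b (pd a (K ν)) x :=
      fun a b ν => pd_comm (hK ν) a b x
    have hT' : ∀ a b g ν : Fin n, (∑ ρ, pd a (pd ρ (K ν)) x * pd b (pd g (K ρ)) x)
        = ∑ ρ, pd a (pd b (K ρ)) x * pd ρ (pd g (K ν)) x := fun a b g ν => hAE a b g ν x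
    have hD12' : ∀ s a b ν : Fin n,
        pd s (pd a (pd b (K ν))) x = pd a (pd s (pd b (K ν))) x :=
      fun s a b ν => pd_comm (pd_contDiff (hK ν) b) s a x
    have hD23' : ∀ s a b ν : Fin n,
        pd s (pd a (pd b (K ν))) x = pd s (pd b (pd a (K ν))) x :=
      fun s a b ν => pd_of_eq (fun y => pd_comm (hK ν) a b y) s x
    have hDAE : ∀ s a b g ν : Fin n,
        (∑ ρ, (pd s (pd a (pd ρ (K ν))) x * pd b (pd g (K ρ)) x
            + pd a (pd ρ (K ν)) x * pd s (pd b (pd g (K ρ))) x))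
        = ∑ ρ, (pd s (pd a (pd b (K ρ))) x * pd ρ (pd g (K ν)) x
            + pd a (pd b (K ρ)) x * pd s (pd ρ (pd g (K ν))) x) := by
      intro s a b g ν
      have s1 : pd s (fun y => ∑ ρ, pd a (pd ρ (K ν)) y * pd b (pd g (K ρ)) y) x
          = pd s (fun y => ∑ ρ, pd a (pd b (K ρ)) y * pd ρ (pd g (K ν)) y) x :=
        pd_of_eq (fun y => hAE a b g ν y) s x
      have s2 : pd s (fun y => ∑ ρ, pd a (pd ρ (K ν)) y * pd b (pd g (K ρ)) y) x
          = ∑ ρ, (pd s (pd a (pd ρ (K ν))) x * pd b (pd g (K ρ)) x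
              + pd a (pd ρ (K ν)) x * pd s (pd b (pd g (K ρ))) x) :=
        pd_sum_mul s x
          (fun ρ => ((pd_contDiff (pd_contDiff (hK ν) ρ) a).differentiable (by simp)) x)
          (fun ρ => ((pd_contDiff (pd_contDiff (hK ρ) g) b).differentiable (by simp)) x)
      have s3 : pd s (fun y => ∑ ρ, pd a (pd b (K ρ)) y * pd ρ (pd g (K ν)) y) x
          = ∑ ρ, (pd s (pd a (pd b (K ρ))) x * pd ρ (pd g (K ν)) x
              + pd a (pd b (K ρ)) x * pd s (pd ρ (pd g (K ν))) x) :=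
        pd_sum_mul s x
          (fun ρ => ((pd_contDiff (pd_contDiff (hK ρ) b) a).differentiable (by simp)) x)
          (fun ρ => ((pd_contDiff (pd_contDiff (hK ν) g) ρ).differentiable (by simp)) x)
      rw [← s2, s1, s3]
    -- rewrite the goal using the expansions
    have r1 : (∑ ρ, pd α' (pd ρ (w k ν' β)) x * pd β' (pd γ' (K ρ)) x)
        = ∑ ρ, (∑ σ, (pd α' (pd ρ (pd σ (K ν'))) x * w (k - 1) σ β x
            + pd ρ (pd σ (K ν')) x * (∑ τ, pd α' (pd τ (K σ)) x * d τ)))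
            * pd β' (pd γ' (K ρ)) x :=
      Finset.sum_congr rfl fun ρ _ => by rw [expand α' ν' ρ]
    have r2 : (∑ ρ, pd α' (pd ρ (K ν')) x * pd β' (pd γ' (w k ρ β)) x)
        = ∑ ρ, pd α' (pd ρ (K ν')) x * (∑ σ, (pd β' (pd γ' (pd σ (K ρ))) x * w (k - 1) σ β x
            + pd γ' (pd σ (K ρ)) x * (∑ τ, pd β' (pd τ (K σ)) x * d τ))) :=
      Finset.sum_congr rfl fun ρ _ => by rw [expand β' ρ γ']
    have r3 : (∑ ρ, pd α' (pd β' (w k ρ β)) x * pd ρ (pd γ' (K ν')) x)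
        = ∑ ρ, (∑ σ, (pd α' (pd β' (pd σ (K ρ))) x * w (k - 1) σ β x
            + pd β' (pd σ (K ρ)) x * (∑ τ, pd α' (pd τ (K σ)) x * d τ)))
            * pd ρ (pd γ' (K ν')) x :=
      Finset.sum_congr rfl fun ρ _ => by rw [expand α' ρ β']
    have r4 : (∑ ρ, pd α' (pd β' (K ρ)) x * pd ρ (pd γ' (w k ν' β)) x)
        = ∑ ρ, pd α' (pd β' (K ρ)) x * (∑ σ, (pd ρ (pd γ' (pd σ (K ν'))) x * w (k - 1) σ β x
            + pd γ' (pd σ (K ν')) x * (∑ τ, pd ρ (pd τ (K σ)) x * d τ))) :=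
      Finset.sum_congr rfl fun ρ _ => by rw [expand ρ ν' γ']
    rw [r1, r2, r3, r4]
    exact algebra_key (fun a b ν => pd a (pd b (K ν)) x)
      (fun s a b ν => pd s (pd a (pd b (K ν))) x)
      (fun σ => w (k - 1) σ β x) d hTs' hT' hD12' hD23' hDAE α' β' γ' ν'
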